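/- Let d = 2 and α ∈ (0,2). Let μ be a bounded probability density on ℝ² and let (P_u)_{u>0} be a family of Markov kernels on ℝ² such that: (i) the measure μ(x)dx is invariant for every P_u; (ii) ‖P_u f‖_{L²(μ)} ≤ ‖f‖_{L²(μ)} for every f ∈ L²(μ) and u > 0; (iii) for every u ∈ (0,1], P_u(x,·) has a density p_u(x,·) with respect to Lebesgue measure satisfying p_u(x,y) ≤ c₀ (u^{−1} e^{−λ₀|y−x|²/u} + u/(u^{1/2} + |y−x|)^{2+α}) for all x, y, with constants c₀, λ₀ > 0; (iv) for every u ≥ 1, P_u(x,·) has a density bounded by a constant c₀′; (v) there exist c > 0, ρ > 0 such that ∫_{ℝ²} |P_u g(x) − ∫ g μ dx| μ(x) dx ≤ c e^{−ρu} ‖g‖_∞ for every bounded measurable g and u > 0. Then there is a constant C, independent of f and T, such that for every T > 0 and every bounded measurable f : ℝ² → ℝ whose support S has Lebesgue measure |S| < 1: 2 ∫_0^T (T−u) |⟨P_u f, f⟩_μ − (∫ f μ dx)²| du ≤ C T ‖f‖_∞² |S|² (1 + log(1/|S|)). -/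

import Mathlib

/-!
Write `s = |S|`, `m = ∫ f μ` and `g u = |⟨P_u f, f⟩_μ - m²|`. Because `f` lives on `S` and `μ ≤ Cμ`,
every bounded `φ` satisfies `|⟨φ, f⟩_μ - m²| ≤ ‖f‖_∞ Cμ s (‖φ‖_∞ + ‖f‖_∞ Cμ s)`. For `φ = P_u f`
the sup norm is at most `‖f‖_∞` (Markov property), `(2 c₀ / u) ‖f‖_∞ s` for `u ≤ 1` (the density
bound, whose jump part is `≤ 1 / u` because `α ≤ 2`) and `c₀' ‖f‖_∞ s` for `u ≥ 1`; this gives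
`g u ≲ ‖f‖_∞² s`, `‖f‖_∞² s² / u` and `‖f‖_∞² s²` on `(0, s]`, `(s, 1]` and `(1, ∞)`. Exponential
ergodicity gives `g u ≤ c e^{-ρu} ‖f‖_∞²`, which takes over after `U = 2 log (1 / s) / ρ`, where
`e^{-ρU} = s²`. The resulting majorant of `g` has integral `O(s² (1 + log (1 / s)))`, the logarithm
coming from `∫_s^1 du / u`, and `T - u ≤ T` gives the factor `T`.
-/

open MeasureTheory ProbabilityTheory Real Set Function

section SpatialBounds

variable {X : Type*} [MeasurableSpace X] {ν : Measure X}

lemma abs_integral_mul_mul_le {φ f m : X → ℝ} {B Mf Cm : ℝ} (hS : ν (support f) < ⊤)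
    (hφ : ∀ x, |φ x| ≤ B) (hf : ∀ x, |f x| ≤ Mf) (hm₀ : ∀ x, 0 ≤ m x) (hm : ∀ x, m x ≤ Cm) :
    |∫ x, φ x * f x * m x ∂ν| ≤ B * Mf * Cm * ν.real (support f) := by
  have hvanish : ∀ x ∉ support f, φ x * f x * m x = 0 := fun x hx => by
    simp [notMem_support.1 hx]
  rw [← setIntegral_eq_integral_of_forall_compl_eq_zero hvanish, ← Real.norm_eq_abs]
  refine norm_setIntegral_le_of_norm_le_const hS fun x _ => ?_
  have hB : 0 ≤ B := (abs_nonneg _).trans (hφ x)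
  rw [Real.norm_eq_abs, abs_mul, abs_mul, abs_of_nonneg (hm₀ x)]
  exact mul_le_mul (mul_le_mul (hφ x) (hf x) (abs_nonneg _) hB) (hm x) (hm₀ x)
    (mul_nonneg hB ((abs_nonneg _).trans (hf x)))

lemma abs_integral_withDensity_le {p f : X → ℝ} {B Mf : ℝ} (hp : Measurable p)
    (hp₀ : ∀ y, 0 ≤ p y) (hpB : ∀ y, p y ≤ B) (hS : ν (support f) < ⊤)
    (hf : ∀ y, |f y| ≤ Mf) :
    |∫ y, f y ∂ν.withDensity (fun y => ENNReal.ofReal (p y))| ≤ B * Mf * ν.real (support f) := by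
  rw [integral_withDensity_eq_integral_toReal_smul hp.ennreal_ofReal
    (ae_of_all _ fun _ => ENNReal.ofReal_lt_top)]
  simpa [ENNReal.toReal_ofReal (hp₀ _)] using
    abs_integral_mul_mul_le (m := fun _ => 1) hS
      (fun y => (abs_of_nonneg (hp₀ y)).trans_le (hpB y)) hf
      (fun _ => zero_le_one) (fun _ => le_rfl)

lemma abs_integral_mul_mul_sub_sq_le {φ f μ : X → ℝ} {B Mf Cμ : ℝ}
    (hS : ν (support f) < ⊤) (hφ : ∀ x, |φ x| ≤ B) (hf : ∀ x, |f x| ≤ Mf)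
    (hμ₀ : ∀ x, 0 ≤ μ x) (hμ : ∀ x, μ x ≤ Cμ) :
    |(∫ x, φ x * f x * μ x ∂ν) - (∫ x, f x * μ x ∂ν) ^ 2|
      ≤ Mf * Cμ * ν.real (support f) * (B + Mf * Cμ * ν.real (support f)) := by
  have hφfμ := abs_integral_mul_mul_le hS hφ hf hμ₀ hμ
  have hfμ : |∫ x, f x * μ x ∂ν| ≤ Mf * Cμ * ν.real (support f) := by
    simpa using abs_integral_mul_mul_le (φ := fun _ => 1) hS (fun _ => abs_one.le) hf hμ₀ hμ
  have hfμ_sq := pow_le_pow_left₀ (abs_nonneg _) hfμ 2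
  calc _ ≤ |∫ x, φ x * f x * μ x ∂ν| + |∫ x, f x * μ x ∂ν| ^ 2 := by
        rw [← abs_pow]; exact abs_sub _ _
    _ ≤ _ := by linarith

lemma abs_integral_mul_mul_sub_sq_le_mul_integral {φ f μ : X → ℝ} {B Mf : ℝ}
    (hμ : Integrable μ ν) (hμ₀ : ∀ x, 0 ≤ μ x) (hφm : AEStronglyMeasurable φ ν)
    (hφ : ∀ x, |φ x| ≤ B) (hfm : AEStronglyMeasurable f ν) (hf : ∀ x, |f x| ≤ Mf) :
    |(∫ x, φ x * f x * μ x ∂ν) - (∫ x, f x * μ x ∂ν) ^ 2|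
      ≤ Mf * ∫ x, |φ x - ∫ z, f z * μ z ∂ν| * μ x ∂ν := by
  set m := ∫ z, f z * μ z ∂ν
  have hfμ : Integrable (fun x => f x * μ x) ν := hμ.bdd_mul hfm (ae_of_all _ hf)
  have hφfμ : Integrable (fun x => φ x * f x * μ x) ν := by
    simpa only [mul_assoc] using hfμ.bdd_mul hφm (ae_of_all _ hφ)
  have hdev : Integrable (fun x => |φ x - m| * μ x) ν :=
    hμ.bdd_mul (c := B + |m|) (hφm.sub aestronglyMeasurable_const).norm
      (ae_of_all _ fun x => by
        rw [Real.norm_eq_abs, abs_abs]; linarith [abs_sub (φ x) m, hφ x])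
  have hcentre : (∫ x, φ x * f x * μ x ∂ν) - m ^ 2 = ∫ x, (φ x - m) * f x * μ x ∂ν := by
    simp_rw [sub_mul, mul_assoc m]
    rw [integral_sub hφfμ (hfμ.const_mul m), integral_const_mul, sq]
  rw [hcentre, ← integral_const_mul, ← Real.norm_eq_abs]
  refine norm_integral_le_of_norm_le (hdev.const_mul Mf) (ae_of_all _ fun x => ?_)
  rw [Real.norm_eq_abs, abs_mul, abs_mul, abs_of_nonneg (hμ₀ x)]
  nlinarith [mul_le_mul_of_nonneg_left (hf x) (abs_nonneg (φ x - m)), abs_nonneg (φ x - m),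
    hμ₀ x]

end SpatialBounds

section KernelCovariance

variable {X : Type*} [MeasurableSpace X] {ν : Measure X} {κ : Kernel X X} {μ f : X → ℝ}
  {Mf Cμ : ℝ}

noncomputable def kernelCovariance (ν : Measure X) (κ : Kernel X X) (μ f : X → ℝ) : ℝ :=
  (∫ x, (∫ y, f y ∂κ x) * f x * μ x ∂ν) - (∫ x, f x * μ x ∂ν) ^ 2

lemma abs_integral_le_of_isMarkovKernel [IsMarkovKernel κ] (hf : ∀ y, |f y| ≤ Mf) (x : X) :
    |∫ y, f y ∂κ x| ≤ Mf := by
  simpa using norm_integral_le_of_norm_le_const (μ := κ x)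
    (ae_of_all _ fun y => (Real.norm_eq_abs _).trans_le (hf y))

lemma abs_kernelCovariance_le_of_isMarkovKernel [IsMarkovKernel κ] (hS : ν (support f) < ⊤)
    (hf : ∀ x, |f x| ≤ Mf) (hμ₀ : ∀ x, 0 ≤ μ x) (hμ : ∀ x, μ x ≤ Cμ) :
    |kernelCovariance ν κ μ f|
      ≤ Mf ^ 2 * (Cμ * ν.real (support f) + Cμ ^ 2 * ν.real (support f) ^ 2) :=
  (abs_integral_mul_mul_sub_sq_le hS (abs_integral_le_of_isMarkovKernel hf) hf hμ₀ hμ).trans_eq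
    (by ring)

lemma abs_kernelCovariance_le_of_density {q : X → X → ℝ} {B : ℝ} (hq : ∀ x y, q x y ≤ B)
    (hκ : ∀ x, ∃ p : X → ℝ, Measurable p ∧ (∀ y, 0 ≤ p y ∧ p y ≤ q x y) ∧
      κ x = ν.withDensity (fun y => ENNReal.ofReal (p y)))
    (hS : ν (support f) < ⊤) (hf : ∀ x, |f x| ≤ Mf) (hμ₀ : ∀ x, 0 ≤ μ x) (hμ : ∀ x, μ x ≤ Cμ) :
    |kernelCovariance ν κ μ f|
      ≤ Mf ^ 2 * (Cμ * B * ν.real (support f) ^ 2 + Cμ ^ 2 * ν.real (support f) ^ 2) := by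
  have hκf : ∀ x, |∫ y, f y ∂κ x| ≤ B * Mf * ν.real (support f) := fun x => by
    obtain ⟨p, hp, hpq, hκx⟩ := hκ x
    rw [hκx]
    exact abs_integral_withDensity_le hp (fun y => (hpq y).1) (fun y => (hpq y).2.trans (hq x y))
      hS hf
  exact (abs_integral_mul_mul_sub_sq_le hS hκf hf hμ₀ hμ).trans_eq (by ring)

lemma abs_kernelCovariance_le_of_integral_abs_sub_le [IsMarkovKernel κ] {ε : ℝ}
    (hμ : Integrable μ ν) (hμ₀ : ∀ x, 0 ≤ μ x) (hfm : Measurable f) (hf : ∀ x, |f x| ≤ Mf)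
    (hMf : 0 ≤ Mf) (hε : ∫ x, |(∫ y, f y ∂κ x) - ∫ z, f z * μ z ∂ν| * μ x ∂ν ≤ ε * Mf) :
    |kernelCovariance ν κ μ f| ≤ Mf ^ 2 * ε :=
  calc _ ≤ Mf * ∫ x, |(∫ y, f y ∂κ x) - ∫ z, f z * μ z ∂ν| * μ x ∂ν :=
        abs_integral_mul_mul_sub_sq_le_mul_integral hμ hμ₀
          hfm.stronglyMeasurable.integral_kernel.aestronglyMeasurable
          (abs_integral_le_of_isMarkovKernel hf) hfm.aestronglyMeasurable hf
    _ ≤ Mf * (ε * Mf) := mul_le_mul_of_nonneg_left hε hMf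
    _ = Mf ^ 2 * ε := by ring

end KernelCovariance

lemma inv_mul_exp_add_div_rpow_le {u α lam r : ℝ} (hu₀ : 0 < u) (hu₁ : u ≤ 1)
    (hα₀ : 0 ≤ 2 + α) (hα₂ : α ≤ 2) (hlam : 0 ≤ lam) (hr : 0 ≤ r) :
    u⁻¹ * exp (-lam * r ^ 2 / u) + u / (√u + r) ^ (2 + α) ≤ 2 / u := by
  have hexp : exp (-lam * r ^ 2 / u) ≤ 1 :=
    exp_le_one_iff.2 (div_nonpos_of_nonpos_of_nonneg (by nlinarith) hu₀.le)
  have hjump : u / (√u + r) ^ (2 + α) ≤ u⁻¹ :=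
    calc u / (√u + r) ^ (2 + α) ≤ u / u ^ (1 / 2 * (2 + α)) := by
          rw [rpow_mul hu₀.le, ← sqrt_eq_rpow]
          gcongr
          exact le_add_of_nonneg_right hr
      _ = u ^ (1 - 1 / 2 * (2 + α)) := by rw [rpow_sub hu₀, rpow_one]
      _ ≤ u ^ (-1 : ℝ) := rpow_le_rpow_of_exponent_ge hu₀ hu₁ (by linarith)
      _ = u⁻¹ := rpow_neg_one u
  calc _ ≤ u⁻¹ * 1 + u⁻¹ := by gcongr
    _ = 2 / u := by ring

section CorrelationMajorant

noncomputable def correlationMajorant (a₁ a₂ d s U c ρ : ℝ) : ℝ → ℝ :=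
  (Ioc 0 s).indicator (fun _ => a₁ * s) + (Ioc s 1).indicator (fun v => a₂ * s ^ 2 / v)
    + (Ioc 0 U).indicator (fun _ => d * s ^ 2) + (Ioi U).indicator (fun v => c * exp (-ρ * v))

variable {a₁ a₂ d s U c ρ : ℝ}

lemma correlationMajorant_nonneg (ha₁ : 0 ≤ a₁) (ha₂ : 0 ≤ a₂) (hd : 0 ≤ d) (hs : 0 ≤ s)
    (hc : 0 ≤ c) (u : ℝ) : 0 ≤ correlationMajorant a₁ a₂ d s U c ρ u := by
  simp only [correlationMajorant, Pi.add_apply]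
  refine add_nonneg (add_nonneg (add_nonneg ?_ ?_) ?_) ?_ <;>
    refine indicator_nonneg (fun v hv => ?_) u
  · positivity
  · have : 0 < v := hs.trans_lt hv.1
    positivity
  · positivity
  · positivity

lemma integrable_correlationMajorant_pieces (hs : 0 < s) (hρ : 0 < ρ) :
    Integrable ((Ioc 0 s).indicator fun _ => a₁ * s) ∧
    Integrable ((Ioc s 1).indicator fun v => a₂ * s ^ 2 / v) ∧
    Integrable ((Ioc 0 U).indicator fun _ => d * s ^ 2) ∧
    Integrable ((Ioi U).indicator fun v => c * exp (-ρ * v)) := by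
  refine ⟨IntegrableOn.integrable_indicator (integrableOn_const measure_Ioc_lt_top.ne)
      measurableSet_Ioc, ?_,
    IntegrableOn.integrable_indicator (integrableOn_const measure_Ioc_lt_top.ne) measurableSet_Ioc,
    IntegrableOn.integrable_indicator ((exp_neg_integrableOn_Ioi U hρ).const_mul c)
      measurableSet_Ioi⟩
  refine IntegrableOn.integrable_indicator ?_ measurableSet_Ioc
  exact (continuousOn_const.div continuousOn_id fun v hv => (hs.trans_le hv.1).ne').integrableOn_Icc
    |>.mono_set Ioc_subset_Icc_self

lemma integrable_correlationMajorant (hs : 0 < s) (hρ : 0 < ρ) :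
    Integrable (correlationMajorant a₁ a₂ d s U c ρ) :=
  let ⟨h₁, h₂, h₃, h₄⟩ :=
    integrable_correlationMajorant_pieces (a₁ := a₁) (a₂ := a₂) (d := d) (U := U) (c := c) hs hρ
  ((h₁.add h₂).add h₃).add h₄

lemma integral_correlationMajorant (hs₀ : 0 < s) (hs₁ : s ≤ 1) (hU : 0 ≤ U) (hρ : 0 < ρ) :
    ∫ u, correlationMajorant a₁ a₂ d s U c ρ u
      = a₁ * s ^ 2 + a₂ * s ^ 2 * log (1 / s) + d * s ^ 2 * U + c * exp (-ρ * U) / ρ := by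
  obtain ⟨h₁, h₂, h₃, h₄⟩ :=
    integrable_correlationMajorant_pieces (a₁ := a₁) (a₂ := a₂) (d := d) (U := U) (c := c) hs₀ hρ
  have hinv : ∫ v in Ioc s 1, a₂ * s ^ 2 / v = a₂ * s ^ 2 * log (1 / s) := by
    simp_rw [div_eq_mul_inv]
    rw [integral_const_mul, ← intervalIntegral.integral_of_le hs₁,
      integral_inv_of_pos hs₀ one_pos, one_div, one_mul]
  have hexp : ∫ v in Ioi U, c * exp (-ρ * v) = c * exp (-ρ * U) / ρ := by
    rw [integral_const_mul, integral_exp_mul_Ioi (neg_lt_zero.2 hρ)]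
    ring
  unfold correlationMajorant
  rw [integral_add' ((h₁.add h₂).add h₃) h₄, integral_add' (h₁.add h₂) h₃, integral_add' h₁ h₂,
    integral_indicator_const _ measurableSet_Ioc, integral_indicator measurableSet_Ioc,
    integral_indicator_const _ measurableSet_Ioc, integral_indicator measurableSet_Ioi, hinv, hexp,
    Real.volume_real_Ioc_of_le hs₀.le, Real.volume_real_Ioc_of_le hU, smul_eq_mul, smul_eq_mul]
  ring

lemma integral_correlationMajorant_le (ha₁ : 0 ≤ a₁) (ha₂ : 0 ≤ a₂) (hd : 0 ≤ d) (hc : 0 ≤ c)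
    (hs₀ : 0 < s) (hs₁ : s ≤ 1) (hρ : 0 < ρ) :
    ∫ u, correlationMajorant a₁ a₂ d s (2 * log (1 / s) / ρ) c ρ u
      ≤ (a₁ + a₂ + (2 * d + c) / ρ) * s ^ 2 * (1 + log (1 / s)) := by
  have hL : 0 ≤ log (1 / s) := log_nonneg (one_le_one_div hs₀ hs₁)
  have hexp : exp (-ρ * (2 * log (1 / s) / ρ)) = s ^ 2 := by
    rw [show -ρ * (2 * log (1 / s) / ρ) = log (s ^ 2) by
      rw [log_pow, one_div, log_inv]; field_simp; push_cast; ring, exp_log (by positivity)]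
  rw [integral_correlationMajorant hs₀ hs₁ (by positivity) hρ, hexp]
  have hslack : 0 ≤ a₁ * s ^ 2 * log (1 / s) + a₂ * s ^ 2
      + (2 * d * s ^ 2 + c * s ^ 2 * log (1 / s)) / ρ := by positivity
  calc _ = (a₁ + a₂ + (2 * d + c) / ρ) * s ^ 2 * (1 + log (1 / s))
        - (a₁ * s ^ 2 * log (1 / s) + a₂ * s ^ 2
          + (2 * d * s ^ 2 + c * s ^ 2 * log (1 / s)) / ρ) := by
        field_simp
        ring
    _ ≤ _ := by linarith

end CorrelationMajorant

section TimeIntegral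

lemma setIntegral_Icc_sub_mul_le {g E : ℝ → ℝ} {T : ℝ} (hT : 0 ≤ T) (hE : Integrable E)
    (hE₀ : ∀ u, 0 ≤ E u) (hg₀ : ∀ u, 0 ≤ g u) (hgE : ∀ u ∈ Ioc 0 T, g u ≤ E u) :
    ∫ u in Icc 0 T, (T - u) * g u ≤ T * ∫ u, E u := by
  rw [integral_Icc_eq_integral_Ioc]
  calc ∫ u in Ioc 0 T, (T - u) * g u ≤ ∫ u in Ioc 0 T, T * E u :=
        integral_mono_of_nonneg
          (ae_restrict_of_forall_mem measurableSet_Ioc fun u hu =>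
            mul_nonneg (sub_nonneg.2 hu.2) (hg₀ u))
          (hE.const_mul T).integrableOn
          (ae_restrict_of_forall_mem measurableSet_Ioc fun u hu =>
            mul_le_mul (by linarith [hu.1]) (hgE u hu) (hg₀ u) hT)
    _ = T * ∫ u in Ioc 0 T, E u := integral_const_mul _ _
    _ ≤ T * ∫ u, E u :=
        mul_le_mul_of_nonneg_left (setIntegral_le_integral hE (ae_of_all _ hE₀)) hT

variable {g : ℝ → ℝ} {M a₁ a₂ a₃ b s c ρ : ℝ}

lemma le_mul_correlationMajorant {U u : ℝ} (hM : 0 ≤ M) (ha₁ : 0 ≤ a₁) (ha₂ : 0 ≤ a₂)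
    (ha₃ : 0 ≤ a₃) (hs : 0 ≤ s)
    (hshort : ∀ u ∈ Ioc 0 s, g u ≤ M * (a₁ * s + b * s ^ 2))
    (hmid : ∀ u ∈ Ioc s 1, g u ≤ M * (a₂ * s ^ 2 / u + b * s ^ 2))
    (hlong : ∀ u, 1 < u → g u ≤ M * (a₃ * s ^ 2 + b * s ^ 2))
    (herg : ∀ u > 0, g u ≤ M * (c * exp (-ρ * u))) (hu : 0 < u) :
    g u ≤ M * correlationMajorant a₁ a₂ (a₃ + b) s U c ρ u := by
  have hshort₀ : 0 ≤ (Ioc 0 s).indicator (fun _ => a₁ * s) u :=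
    indicator_nonneg (fun _ _ => by positivity) u
  have hmid₀ : 0 ≤ (Ioc s 1).indicator (fun v => a₂ * s ^ 2 / v) u :=
    indicator_nonneg (fun v hv => div_nonneg (by positivity) (hs.trans hv.1.le)) u
  have hlong₀ : 0 ≤ a₃ * s ^ 2 := by positivity
  simp only [correlationMajorant, Pi.add_apply]
  rcases le_or_gt u U with huU | huU
  · rw [indicator_of_mem (mem_Ioc.2 ⟨hu, huU⟩), indicator_of_notMem (notMem_Ioi.2 huU),
      add_zero]
    rcases le_or_gt u s with hus | hus
    · rw [indicator_of_mem (mem_Ioc.2 ⟨hu, hus⟩),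
        indicator_of_notMem (fun h : u ∈ Ioc s 1 => h.1.not_ge hus), add_zero]
      exact (hshort u ⟨hu, hus⟩).trans (mul_le_mul_of_nonneg_left (by linarith) hM)
    · rw [indicator_of_notMem (fun h : u ∈ Ioc 0 s => hus.not_ge h.2), zero_add]
      rcases le_or_gt u 1 with hu₁ | hu₁
      · rw [indicator_of_mem (mem_Ioc.2 ⟨hus, hu₁⟩)]
        exact (hmid u ⟨hus, hu₁⟩).trans (mul_le_mul_of_nonneg_left (by linarith) hM)
      · exact (hlong u hu₁).trans (mul_le_mul_of_nonneg_left (by linarith) hM)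
  · rw [indicator_of_notMem (fun h : u ∈ Ioc 0 U => huU.not_ge h.2),
      indicator_of_mem (mem_Ioi.2 huU), add_zero]
    exact (herg u hu).trans (mul_le_mul_of_nonneg_left (by linarith) hM)

lemma setIntegral_Icc_sub_mul_le_of_correlation_bounds {T : ℝ} (hM : 0 ≤ M) (ha₁ : 0 ≤ a₁)
    (ha₂ : 0 ≤ a₂) (ha₃ : 0 ≤ a₃) (hb : 0 ≤ b) (hs₀ : 0 ≤ s) (hs₁ : s ≤ 1) (hc : 0 ≤ c)
    (hρ : 0 < ρ) (hT : 0 ≤ T) (hg₀ : ∀ u, 0 ≤ g u)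
    (hshort : ∀ u ∈ Ioc 0 s, g u ≤ M * (a₁ * s + b * s ^ 2))
    (hmid : ∀ u ∈ Ioc s 1, g u ≤ M * (a₂ * s ^ 2 / u + b * s ^ 2))
    (hlong : ∀ u, 1 < u → g u ≤ M * (a₃ * s ^ 2 + b * s ^ 2))
    (herg : ∀ u > 0, g u ≤ M * (c * exp (-ρ * u))) :
    ∫ u in Icc 0 T, (T - u) * g u
      ≤ (a₁ + a₂ + (2 * (a₃ + b) + c) / ρ) * T * M * s ^ 2 * (1 + log (1 / s)) := by
  rcases hs₀.eq_or_lt with rfl | hs₀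
  · have hg : ∀ u ∈ Ioc 0 T, g u ≤ 0 := fun u hu => by
      rcases le_or_gt u 1 with hu₁ | hu₁
      · simpa using hmid u ⟨hu.1, hu₁⟩
      · simpa using hlong u hu₁
    simpa using setIntegral_Icc_sub_mul_le hT (integrable_zero _ _ _) (fun _ => le_rfl) hg₀ hg
  calc _ ≤ T * ∫ u, M * correlationMajorant a₁ a₂ (a₃ + b) s (2 * log (1 / s) / ρ) c ρ u :=
        setIntegral_Icc_sub_mul_le hT ((integrable_correlationMajorant hs₀ hρ).const_mul M)
          (fun u => mul_nonneg hM (correlationMajorant_nonneg ha₁ ha₂ (by positivity) hs₀.le hc u))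
          hg₀ fun u hu =>
            le_mul_correlationMajorant hM ha₁ ha₂ ha₃ hs₀.le hshort hmid hlong herg hu.1
    _ ≤ T * (M * ((a₁ + a₂ + (2 * (a₃ + b) + c) / ρ) * s ^ 2 * (1 + log (1 / s)))) := by
        rw [integral_const_mul]
        gcongr
        exact integral_correlationMajorant_le ha₁ ha₂ (by positivity) hc hs₀ hs₁ hρ
    _ = _ := by ring

end TimeIntegral

theorem stmt7_general (α : ℝ) (hα : α ∈ Set.Ioo (0 : ℝ) 2)
    (μ : EuclideanSpace ℝ (Fin 2) → ℝ)
    (hμ_nonneg : ∀ x, 0 ≤ μ x) (Cμ : ℝ) (hμ_bdd : ∀ x, μ x ≤ Cμ)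
    (hμ_prob : ∫ x, μ x = 1)
    (P : ℝ → Kernel (EuclideanSpace ℝ (Fin 2)) (EuclideanSpace ℝ (Fin 2)))
    (hP_markov : ∀ u > (0 : ℝ), IsMarkovKernel (P u))
    -- (iii) small-time density bound
    (c₀ lam₀ : ℝ) (hc₀ : 0 < c₀) (hlam₀ : 0 < lam₀)
    (h_dens : ∀ u ∈ Set.Ioc (0 : ℝ) 1, ∀ x, ∃ p : EuclideanSpace ℝ (Fin 2) → ℝ,
      Measurable p ∧
      (∀ y, 0 ≤ p y ∧ p y ≤ c₀ * (u⁻¹ * Real.exp (-lam₀ * ‖y - x‖ ^ 2 / u)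
        + u / (Real.sqrt u + ‖y - x‖) ^ ((2 : ℝ) + α))) ∧
      (P u) x = volume.withDensity (fun y => ENNReal.ofReal (p y)))
    -- (iv) bounded density for u ≥ 1
    (c₀' : ℝ)
    (h_dens1 : ∀ u : ℝ, 1 ≤ u → ∀ x, ∃ p : EuclideanSpace ℝ (Fin 2) → ℝ,
      Measurable p ∧ (∀ y, 0 ≤ p y ∧ p y ≤ c₀') ∧
      (P u) x = volume.withDensity (fun y => ENNReal.ofReal (p y)))
    -- (v) exponential ergodicity
    (c ρ : ℝ) (hc : 0 < c) (hρ : 0 < ρ)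
    (h_erg : ∀ u > (0 : ℝ), ∀ g : EuclideanSpace ℝ (Fin 2) → ℝ, ∀ Mg : ℝ,
      Measurable g → (∀ x, |g x| ≤ Mg) →
      ∫ x, |(∫ y, g y ∂(P u x)) - ∫ z, g z * μ z| * μ x ≤ c * Real.exp (-ρ * u) * Mg) :
    ∃ C : ℝ, ∀ T > (0 : ℝ), ∀ f : EuclideanSpace ℝ (Fin 2) → ℝ, ∀ Mf : ℝ,
      Measurable f → (∀ x, |f x| ≤ Mf) → volume (Function.support f) < 1 →
      2 * (∫ u in Set.Icc 0 T, (T - u) *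
          |(∫ x, (∫ y, f y ∂(P u x)) * f x * μ x) - (∫ x, f x * μ x) ^ 2|)
        ≤ C * T * Mf ^ 2 * (volume (Function.support f)).toReal ^ 2 *
          (1 + Real.log (1 / (volume (Function.support f)).toReal)) := by
  have hμ_int : Integrable μ := .of_integral_ne_zero (by simp [hμ_prob])
  have hCμ : 0 ≤ Cμ := (hμ_nonneg 0).trans (hμ_bdd 0)
  have hc₀' : 0 ≤ c₀' := by
    obtain ⟨p, -, hp, -⟩ := h_dens1 1 le_rfl 0
    exact (hp 0).1.trans (hp 0).2
  refine ⟨2 * (Cμ + 2 * c₀ * Cμ + (2 * (Cμ * c₀' + Cμ ^ 2) + c) / ρ),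
    fun T hT f Mf hf hfM hS => ?_⟩
  have hMf : 0 ≤ Mf := (abs_nonneg _).trans (hfM 0)
  have hSfin : volume (support f) < ⊤ := hS.trans ENNReal.one_lt_top
  have hs₁ : volume.real (support f) < 1 := ENNReal.toReal_lt_of_lt_ofReal (by simpa using hS)
  refine (mul_le_mul_of_nonneg_left (setIntegral_Icc_sub_mul_le_of_correlation_bounds
    (g := fun u => |kernelCovariance volume (P u) μ f|) (a₂ := 2 * c₀ * Cμ) (a₃ := Cμ * c₀')
    (sq_nonneg Mf) hCμ (by positivity) (by positivity) (sq_nonneg Cμ) measureReal_nonneg hs₁.le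
    hc.le hρ hT.le (fun _ => abs_nonneg _) ?short ?mid ?long ?erg) zero_le_two).trans_eq
    (by rw [measureReal_def]; ring)
  case short =>
    intro u hu
    have := hP_markov u hu.1
    exact abs_kernelCovariance_le_of_isMarkovKernel hSfin hfM hμ_nonneg hμ_bdd
  case mid =>
    intro u hu
    have hu₀ : 0 < u := measureReal_nonneg.trans_lt hu.1
    have hq : ∀ x y : EuclideanSpace ℝ (Fin 2), c₀ * (u⁻¹ * exp (-lam₀ * ‖y - x‖ ^ 2 / u)
        + u / (√u + ‖y - x‖) ^ ((2 : ℝ) + α)) ≤ c₀ * (2 / u) := fun x y =>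
      mul_le_mul_of_nonneg_left (inv_mul_exp_add_div_rpow_le hu₀ hu.2 (by linarith [hα.1])
        hα.2.le hlam₀.le (norm_nonneg _)) hc₀.le
    exact (abs_kernelCovariance_le_of_density hq (h_dens u ⟨hu₀, hu.2⟩) hSfin hfM hμ_nonneg
      hμ_bdd).trans_eq (by ring)
  case long =>
    exact fun u hu => abs_kernelCovariance_le_of_density (fun _ _ => le_rfl) (h_dens1 u hu.le)
      hSfin hfM hμ_nonneg hμ_bdd
  case erg =>
    intro u hu
    have := hP_markov u hu
    exact abs_kernelCovariance_le_of_integral_abs_sub_le hμ_int hμ_nonneg hf hfM hMf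
      (h_erg u hu f Mf hf hfM)

/-- Variance-covariance bound, case `d = 2`: under invariance,
L²(μ)-contractivity, the two-regime transition-density bounds and exponential
ergodicity, `2∫_0^T (T-u)|⟨P_u f,f⟩_μ - (∫ fμ)²| du ≤ C T ‖f‖_∞² |S|² (1 + log(1/|S|))`
for every bounded measurable `f : ℝ² → ℝ` with support of Lebesgue measure `< 1`. -/
theorem stmt7 (α : ℝ) (hα : α ∈ Set.Ioo (0 : ℝ) 2)
    (μ : EuclideanSpace ℝ (Fin 2) → ℝ) (hμ_meas : Measurable μ)
    (hμ_nonneg : ∀ x, 0 ≤ μ x) (Cμ : ℝ) (hμ_bdd : ∀ x, μ x ≤ Cμ)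
    (hμ_prob : ∫ x, μ x = 1)
    (P : ℝ → Kernel (EuclideanSpace ℝ (Fin 2)) (EuclideanSpace ℝ (Fin 2)))
    (hP_markov : ∀ u > (0 : ℝ), IsMarkovKernel (P u))
    -- (i) invariance of μ(x)dx
    (h_inv : ∀ u > (0 : ℝ), ∀ f : EuclideanSpace ℝ (Fin 2) → ℝ, ∀ Mf : ℝ,
      Measurable f → (∀ x, |f x| ≤ Mf) →
      ∫ x, (∫ y, f y ∂(P u x)) * μ x = ∫ x, f x * μ x)
    -- (ii) contraction on L²(μ)
    (h_contr : ∀ u > (0 : ℝ), ∀ f : EuclideanSpace ℝ (Fin 2) → ℝ, Measurable f →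
      Integrable (fun x => f x ^ 2 * μ x) →
      ∫ x, (∫ y, f y ∂(P u x)) ^ 2 * μ x ≤ ∫ x, f x ^ 2 * μ x)
    -- (iii) small-time density bound
    (c₀ lam₀ : ℝ) (hc₀ : 0 < c₀) (hlam₀ : 0 < lam₀)
    (h_dens : ∀ u ∈ Set.Ioc (0 : ℝ) 1, ∀ x, ∃ p : EuclideanSpace ℝ (Fin 2) → ℝ,
      Measurable p ∧
      (∀ y, 0 ≤ p y ∧ p y ≤ c₀ * (u⁻¹ * Real.exp (-lam₀ * ‖y - x‖ ^ 2 / u)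
        + u / (Real.sqrt u + ‖y - x‖) ^ ((2 : ℝ) + α))) ∧
      (P u) x = volume.withDensity (fun y => ENNReal.ofReal (p y)))
    -- (iv) bounded density for u ≥ 1
    (c₀' : ℝ)
    (h_dens1 : ∀ u : ℝ, 1 ≤ u → ∀ x, ∃ p : EuclideanSpace ℝ (Fin 2) → ℝ,
      Measurable p ∧ (∀ y, 0 ≤ p y ∧ p y ≤ c₀') ∧
      (P u) x = volume.withDensity (fun y => ENNReal.ofReal (p y)))
    -- (v) exponential ergodicity
    (c ρ : ℝ) (hc : 0 < c) (hρ : 0 < ρ)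
    (h_erg : ∀ u > (0 : ℝ), ∀ g : EuclideanSpace ℝ (Fin 2) → ℝ, ∀ Mg : ℝ,
      Measurable g → (∀ x, |g x| ≤ Mg) →
      ∫ x, |(∫ y, g y ∂(P u x)) - ∫ z, g z * μ z| * μ x ≤ c * Real.exp (-ρ * u) * Mg) :
    ∃ C : ℝ, ∀ T > (0 : ℝ), ∀ f : EuclideanSpace ℝ (Fin 2) → ℝ, ∀ Mf : ℝ,
      Measurable f → (∀ x, |f x| ≤ Mf) → volume (Function.support f) < 1 →
      2 * (∫ u in Set.Icc 0 T, (T - u) *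
          |(∫ x, (∫ y, f y ∂(P u x)) * f x * μ x) - (∫ x, f x * μ x) ^ 2|)
        ≤ C * T * Mf ^ 2 * (volume (Function.support f)).toReal ^ 2 *
          (1 + Real.log (1 / (volume (Function.support f)).toReal)) :=
  stmt7_general α hα μ hμ_nonneg Cμ hμ_bdd hμ_prob P hP_markov c₀ lam₀ hc₀ hlam₀ h_dens c₀' h_dens1
    c ρ hc hρ h_erg
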